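/- Let 𝒪 = {(x,v,a) ∈ ℝ³ : v ≠ 0} and define on 𝒪 the vector fields X₁(x,v,a) = (0,0,2v), X₂(x,v,a) = (0,v,2a), X₃(x,v,a) = (v,a,3a²/(2v)). Then at every point of 𝒪 the Lie brackets satisfy [X₁,X₂] = X₁, [X₁,X₃] = 2X₂, and [X₂,X₃] = X₃; in particular X₁, X₂, X₃ span a Lie algebra of vector fields isomorphic to 𝔰𝔩₂ (the Vessiot–Guldberg Lie algebra of the first-order system associated with the Schwarz equation). -/
import Mathlib


/-- The pointwise Lie bracket of two vector fields on (an open subset of) ℝⁿ,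
    `[V,W](p) = (DW)(p)(V(p)) − (DV)(p)(W(p))`. -/
noncomputable def vbracket {n : ℕ} (V W : (Fin n → ℝ) → (Fin n → ℝ)) :
    (Fin n → ℝ) → (Fin n → ℝ) :=
  fun p => fderiv ℝ W p (V p) - fderiv ℝ V p (W p)

/-- Coordinates on 𝒪 ⊂ ℝ³ are (x,v,a) = (p 0, p 1, p 2). -/
def schX₁ : (Fin 3 → ℝ) → (Fin 3 → ℝ) := fun p => ![0, 0, 2 * p 1]

def schX₂ : (Fin 3 → ℝ) → (Fin 3 → ℝ) := fun p => ![0, p 1, 2 * p 2]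

noncomputable def schX₃ : (Fin 3 → ℝ) → (Fin 3 → ℝ) :=
  fun p => ![p 1, p 2, 3 * (p 2) ^ 2 / (2 * p 1)]

open ContinuousLinearMap

noncomputable abbrev schPr (i : Fin 3) : (Fin 3 → ℝ) →L[ℝ] ℝ := proj i

lemma sch_fd1 (p v : Fin 3 → ℝ) : fderiv ℝ schX₁ p v = ![0, 0, 2 * v 1] := by
  have hL : HasFDerivAt schX₁ (ContinuousLinearMap.pi ![0, 0, (2:ℝ) • schPr 1]) p := by
    rw [hasFDerivAt_pi']
    intro i
    fin_cases i <;> simp [schX₁, proj_pi]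
    · exact hasFDerivAt_const _ _
    · exact hasFDerivAt_const _ _
    · exact ((schPr 1).hasFDerivAt).const_mul 2
  rw [hL.fderiv]
  funext j
  fin_cases j <;> simp

lemma sch_fd2 (p v : Fin 3 → ℝ) : fderiv ℝ schX₂ p v = ![0, v 1, 2 * v 2] := by
  have hL : HasFDerivAt schX₂ (ContinuousLinearMap.pi ![0, schPr 1, (2:ℝ) • schPr 2]) p := by
    rw [hasFDerivAt_pi']
    intro i
    fin_cases i <;> simp [schX₂, proj_pi]
    · exact hasFDerivAt_const _ _
    · exact (schPr 1).hasFDerivAt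
    · exact ((schPr 2).hasFDerivAt).const_mul 2
  rw [hL.fderiv]
  funext j
  fin_cases j <;> simp

lemma sch_fd3 (p : Fin 3 → ℝ) (hp : p 1 ≠ 0) (v : Fin 3 → ℝ) :
    fderiv ℝ schX₃ p v
      = ![v 1, v 2, 3 * p 2 / p 1 * v 2 - 3 * p 2 ^ 2 / (2 * p 1 ^ 2) * v 1] := by
  have hd : (2:ℝ) * p 1 ≠ 0 := mul_ne_zero two_ne_zero hp
  have hinv : HasFDerivAt (fun x : Fin 3 → ℝ => (2 * x 1)⁻¹)
      ((-mulLeftRight ℝ ℝ (2 * p 1)⁻¹ (2 * p 1)⁻¹).comp ((2:ℝ) • schPr 1)) p :=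
    (hasFDerivAt_inv' hd).comp p ((schPr 1).hasFDerivAt.const_mul 2)
  have h := (((schPr 2).hasFDerivAt.mul (schPr 2).hasFDerivAt).const_mul 3).mul hinv
  have he : (fun x : Fin 3 → ℝ => 3 * x 2 ^ 2 / (2 * x 1))
      = fun x : Fin 3 → ℝ => 3 * (x 2 * x 2) * (2 * x 1)⁻¹ := by
    funext x; ring
  set D := ((3:ℝ) * ((schPr 2) p * (schPr 2) p)) •
      (-mulLeftRight ℝ ℝ (2 * p 1)⁻¹ (2 * p 1)⁻¹).comp ((2:ℝ) • schPr 1) +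
      ((2 * p 1)⁻¹ : ℝ) • (3:ℝ) • ((schPr 2) p • schPr 2 + (schPr 2) p • schPr 2) with hDdef
  have hL : HasFDerivAt schX₃ (ContinuousLinearMap.pi ![schPr 1, schPr 2, D]) p := by
    rw [hasFDerivAt_pi']
    intro i
    fin_cases i <;> simp [schX₃, proj_pi]
    · exact (schPr 1).hasFDerivAt
    · exact (schPr 2).hasFDerivAt
    · rw [he]; exact h
  rw [hL.fderiv]
  funext j
  fin_cases j <;> simp [hDdef, mulLeftRight_apply]
  field_simp
  ring

/-- On 𝒪 = {(x,v,a) ∈ ℝ³ : v ≠ 0}, the vector fields X₁, X₂, X₃ of the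
first-order Schwarz system satisfy the 𝔰𝔩₂ commutation relations
[X₁,X₂] = X₁, [X₁,X₃] = 2X₂, [X₂,X₃] = X₃. -/
theorem schwarz_sl2_commutation_relations :
    ∀ p : Fin 3 → ℝ, p 1 ≠ 0 →
      vbracket schX₁ schX₂ p = schX₁ p ∧
      vbracket schX₁ schX₃ p = (2 : ℝ) • schX₂ p ∧
      vbracket schX₂ schX₃ p = schX₃ p := by
  intro p hp
  refine ⟨?_, ?_, ?_⟩
  · rw [vbracket, sch_fd2, sch_fd1]
    funext j
    fin_cases j <;> simp [schX₁, schX₂] <;> ring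
  · rw [vbracket, sch_fd3 p hp, sch_fd1]
    funext j
    fin_cases j <;> simp [schX₁, schX₂, schX₃] <;> (try field_simp) <;> (try ring)
  · rw [vbracket, sch_fd3 p hp, sch_fd2]
    funext j
    fin_cases j <;> simp [schX₂, schX₃] <;> (try field_simp) <;> (try ring)
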